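/- arXiv:1308.4321 — 2 statements merged into one kernel-verified Lean document; each statement's English description precedes it below -/
import Mathlib

section
/- Let P and Q be two simple sequences of n distinct points in ℝ², and suppose there is a continuous path in (ℝ²)ⁿ from P to Q such that every point sequence along the path is simple (consists of distinct points and has a super-order type containing no zeros). Then P and Q have the same super-order type. -/
/-- Cross product of two planar vectors. -/
def cross (u v : ℝ × ℝ) : ℝ := u.1 * v.2 - u.2 * v.1

/-- The line through `p` and `q`, as a set of points. -/
def lineThrough (p q : ℝ × ℝ) : Set (ℝ × ℝ) := {x | ∃ t : ℝ, x = p + t • (q - p)}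

/-- A sextuple of points is degenerate if one of the three lines `A = a₁a₂`,
`B = b₁b₂`, `C = c₁c₂` is vertical, or `A` is parallel to `B` or to `C`,
or `A`, `B`, `C` pass through a common point. -/
def IsDegenerate (a₁ a₂ b₁ b₂ c₁ c₂ : ℝ × ℝ) : Prop :=
  a₁.1 = a₂.1 ∨ b₁.1 = b₂.1 ∨ c₁.1 = c₂.1 ∨
  cross (a₂ - a₁) (b₂ - b₁) = 0 ∨ cross (a₂ - a₁) (c₂ - c₁) = 0 ∨
  ∃ p : ℝ × ℝ, p ∈ lineThrough a₁ a₂ ∧ p ∈ lineThrough b₁ b₂ ∧ p ∈ lineThrough c₁ c₂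

/-- The parameter `t` such that `a₁ + t • (a₂ - a₁)` is the intersection of the
line through `a₁, a₂` with the line through `b₁, b₂` (when the lines are not
parallel). -/
noncomputable def interParam (a₁ a₂ b₁ b₂ : ℝ × ℝ) : ℝ :=
  cross (b₁ - a₁) (b₂ - b₁) / cross (a₂ - a₁) (b₂ - b₁)

/-- The type `σ(T)` of a sextuple of points: `0` if degenerate, `-1` if `A ∩ B`
comes before `A ∩ C` along the direction of `A`, and `+1` otherwise. -/
noncomputable def sextType (a₁ a₂ b₁ b₂ c₁ c₂ : ℝ × ℝ) : ℤ :=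
  open Classical in
  if IsDegenerate a₁ a₂ b₁ b₂ c₁ c₂ then 0
  else if interParam a₁ a₂ b₁ b₂ < interParam a₁ a₂ c₁ c₂ then -1 else 1

/-- A sextuple of indices is admissible: the three pairs consist of distinct
indices, are pairwise distinct as unordered pairs, and have empty common
intersection. -/
def AdmissibleIdx {n : ℕ} (i₁ i₂ j₁ j₂ k₁ k₂ : Fin n) : Prop :=
  i₁ ≠ i₂ ∧ j₁ ≠ j₂ ∧ k₁ ≠ k₂ ∧
  ({i₁, i₂} : Finset (Fin n)) ≠ {j₁, j₂} ∧
  ({j₁, j₂} : Finset (Fin n)) ≠ {k₁, k₂} ∧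
  ({k₁, k₂} : Finset (Fin n)) ≠ {i₁, i₂} ∧
  ({i₁, i₂} ∩ {j₁, j₂} ∩ {k₁, k₂} : Finset (Fin n)) = ∅

/-- The super-order type of a point sequence `P`: the family of types of all
sextuples of points indexed by admissible index sextuples (non-admissible
index sextuples are mapped to `0`). -/
noncomputable def superOrderType {n : ℕ} (P : Fin n → ℝ × ℝ) :
    Fin n × Fin n × Fin n × Fin n × Fin n × Fin n → ℤ :=
  open Classical in
  fun t =>
    if AdmissibleIdx t.1 t.2.1 t.2.2.1 t.2.2.2.1 t.2.2.2.2.1 t.2.2.2.2.2 then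
      sextType (P t.1) (P t.2.1) (P t.2.2.1) (P t.2.2.2.1) (P t.2.2.2.2.1) (P t.2.2.2.2.2)
    else 0

/-- A sequence of distinct points is simple if its super-order type contains
no zeros. -/
def IsSimpleSeq {n : ℕ} (P : Fin n → ℝ × ℝ) : Prop :=
  Function.Injective P ∧
  ∀ i₁ i₂ j₁ j₂ k₁ k₂ : Fin n, AdmissibleIdx i₁ i₂ j₁ j₂ k₁ k₂ →
    sextType (P i₁) (P i₂) (P j₁) (P j₂) (P k₁) (P k₂) ≠ 0

/-!
On a nondegenerate sextuple the type is the sign of `sextPoly`, a polynomial in the coordinates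
obtained by clearing denominators in the comparison of the two intersection parameters, and
`sextPoly` vanishes only on degenerate sextuples.
Along a path of simple sequences each of these polynomials is continuous and never zero, so by the
intermediate value theorem its sign, and with it each entry of the super-order type, is constant.
-/

theorem IsPreconnected.lt_iff_lt_of_forall_ne {X α : Type*} [TopologicalSpace X] [LinearOrder α]
    [TopologicalSpace α] [OrderClosedTopology α] {s : Set X} (hs : IsPreconnected s) {g : X → α}
    (hg : ContinuousOn g s) {c : α} (hne : ∀ z ∈ s, g z ≠ c) {x y : X} (hx : x ∈ s)
    (hy : y ∈ s) : c < g x ↔ c < g y := by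
  have lt_of_lt_at : ∀ x ∈ s, ∀ y ∈ s, c < g x → c < g y := by
    intro x hx y hy hcx
    by_contra! hcy
    obtain ⟨z, hz, hgz⟩ := hs.intermediate_value hy hx hg ⟨hcy, hcx.le⟩
    exact hne z hz hgz
  exact ⟨lt_of_lt_at x hx y hy, lt_of_lt_at y hy x hx⟩

/-- `interParam a₁ a₂ c₁ c₂ - interParam a₁ a₂ b₁ b₂` with its denominators cleared, keeping the
sign. -/
def sextPoly (a₁ a₂ b₁ b₂ c₁ c₂ : ℝ × ℝ) : ℝ :=
  (cross (c₁ - a₁) (c₂ - c₁) * cross (a₂ - a₁) (b₂ - b₁)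
    - cross (b₁ - a₁) (b₂ - b₁) * cross (a₂ - a₁) (c₂ - c₁))
  * (cross (a₂ - a₁) (b₂ - b₁) * cross (a₂ - a₁) (c₂ - c₁))

theorem Continuous.sextPoly {X : Type*} [TopologicalSpace X] {a₁ a₂ b₁ b₂ c₁ c₂ : X → ℝ × ℝ}
    (ha₁ : Continuous a₁) (ha₂ : Continuous a₂) (hb₁ : Continuous b₁) (hb₂ : Continuous b₂)
    (hc₁ : Continuous c₁) (hc₂ : Continuous c₂) :
    Continuous fun x => sextPoly (a₁ x) (a₂ x) (b₁ x) (b₂ x) (c₁ x) (c₂ x) := by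
  simp only [_root_.sextPoly, cross, Prod.fst_sub, Prod.snd_sub]
  fun_prop

section Nondegenerate

variable {a₁ a₂ b₁ b₂ c₁ c₂ : ℝ × ℝ}

theorem interParam_lt_interParam_iff_sextPoly_pos (hB : cross (a₂ - a₁) (b₂ - b₁) ≠ 0)
    (hC : cross (a₂ - a₁) (c₂ - c₁) ≠ 0) :
    interParam a₁ a₂ b₁ b₂ < interParam a₁ a₂ c₁ c₂ ↔ 0 < sextPoly a₁ a₂ b₁ b₂ c₁ c₂ := by
  have hdiff : interParam a₁ a₂ c₁ c₂ - interParam a₁ a₂ b₁ b₂ =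
      (cross (c₁ - a₁) (c₂ - c₁) * cross (a₂ - a₁) (b₂ - b₁)
        - cross (b₁ - a₁) (b₂ - b₁) * cross (a₂ - a₁) (c₂ - c₁))
      / (cross (a₂ - a₁) (b₂ - b₁) * cross (a₂ - a₁) (c₂ - c₁)) := by
    unfold interParam
    field_simp
  rw [← sub_pos, hdiff, sextPoly]
  exact div_pos_iff.trans mul_pos_iff.symm

theorem add_interParam_smul_mem_lineThrough (hB : cross (a₂ - a₁) (b₂ - b₁) ≠ 0) :
    a₁ + interParam a₁ a₂ b₁ b₂ • (a₂ - a₁) ∈ lineThrough b₁ b₂ := by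
  refine ⟨cross (b₁ - a₁) (a₂ - a₁) / cross (a₂ - a₁) (b₂ - b₁), ?_⟩
  simp only [interParam, Prod.ext_iff, Prod.fst_add, Prod.snd_add, Prod.smul_fst,
    Prod.smul_snd, Prod.fst_sub, Prod.snd_sub, smul_eq_mul]
  constructor <;> (field_simp; simp only [cross, Prod.fst_sub, Prod.snd_sub]; ring)

theorem sextPoly_ne_zero (h : ¬IsDegenerate a₁ a₂ b₁ b₂ c₁ c₂) :
    sextPoly a₁ a₂ b₁ b₂ c₁ c₂ ≠ 0 := by
  simp only [IsDegenerate, not_or, not_exists, not_and] at h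
  obtain ⟨-, -, -, hB, hC, hcommon⟩ := h
  refine mul_ne_zero (fun hnum => ?_) (mul_ne_zero hB hC)
  have hparam : interParam a₁ a₂ b₁ b₂ = interParam a₁ a₂ c₁ c₂ := by
    rw [interParam, interParam, div_eq_div_iff hB hC]
    linarith [sub_eq_zero.1 hnum]
  refine hcommon _ ⟨_, rfl⟩ (add_interParam_smul_mem_lineThrough hB) ?_
  rw [hparam]
  exact add_interParam_smul_mem_lineThrough hC

theorem sextType_eq_ite_sextPoly_pos (h : ¬IsDegenerate a₁ a₂ b₁ b₂ c₁ c₂) :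
    sextType a₁ a₂ b₁ b₂ c₁ c₂ = if 0 < sextPoly a₁ a₂ b₁ b₂ c₁ c₂ then -1 else 1 := by
  have hB : cross (a₂ - a₁) (b₂ - b₁) ≠ 0 := fun h' => h (by simp [IsDegenerate, h'])
  have hC : cross (a₂ - a₁) (c₂ - c₁) ≠ 0 := fun h' => h (by simp [IsDegenerate, h'])
  rw [sextType, if_neg h]
  exact if_congr (interParam_lt_interParam_iff_sextPoly_pos hB hC) rfl rfl

theorem not_isDegenerate_of_sextType_ne_zero (h : sextType a₁ a₂ b₁ b₂ c₁ c₂ ≠ 0) :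
    ¬IsDegenerate a₁ a₂ b₁ b₂ c₁ c₂ := fun hdeg => h (by simp [sextType, hdeg])

end Nondegenerate

theorem superOrderType_eq_of_isPreconnected {n : ℕ} {S : Set (Fin n → ℝ × ℝ)}
    (hS : IsPreconnected S) (hsimple : ∀ R ∈ S, IsSimpleSeq R) {P Q : Fin n → ℝ × ℝ}
    (hP : P ∈ S) (hQ : Q ∈ S) : superOrderType P = superOrderType Q := by
  funext ⟨i₁, i₂, j₁, j₂, k₁, k₂⟩
  simp only [superOrderType]
  split_ifs with hadm
  · have hnd : ∀ R ∈ S, ¬IsDegenerate (R i₁) (R i₂) (R j₁) (R j₂) (R k₁) (R k₂) := fun R hR =>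
      not_isDegenerate_of_sextType_ne_zero ((hsimple R hR).2 _ _ _ _ _ _ hadm)
    have hcont : Continuous fun R : Fin n → ℝ × ℝ =>
        sextPoly (R i₁) (R i₂) (R j₁) (R j₂) (R k₁) (R k₂) :=
      .sextPoly (continuous_apply _) (continuous_apply _) (continuous_apply _)
        (continuous_apply _) (continuous_apply _) (continuous_apply _)
    rw [sextType_eq_ite_sextPoly_pos (hnd P hP), sextType_eq_ite_sextPoly_pos (hnd Q hQ)]
    exact if_congr (hS.lt_iff_lt_of_forall_ne hcont.continuousOn
      (fun R hR => sextPoly_ne_zero (hnd R hR)) hP hQ) rfl rfl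
  · rfl

theorem super_order_type_constant_along_simple_path_general {n : ℕ}
    (P Q : Fin n → ℝ × ℝ)
    (f : ℝ → Fin n → ℝ × ℝ) (hf : ContinuousOn f (Set.Icc 0 1))
    (hf0 : f 0 = P) (hf1 : f 1 = Q)
    (hsimple : ∀ t ∈ Set.Icc (0 : ℝ) 1, IsSimpleSeq (f t)) :
    superOrderType P = superOrderType Q := by
  have hI : IsPreconnected (f '' Set.Icc 0 1) := isPreconnected_Icc.image f hf
  refine superOrderType_eq_of_isPreconnected hI ?_ ?_ ?_
  · rintro _ ⟨t, ht, rfl⟩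
    exact hsimple t ht
  · exact hf0 ▸ ⟨0, ⟨le_rfl, zero_le_one⟩, rfl⟩
  · exact hf1 ▸ ⟨1, ⟨zero_le_one, le_rfl⟩, rfl⟩

/-- If two simple point sequences `P` and `Q` are joined by a continuous path in
`(ℝ²)ⁿ` all of whose points are simple sequences, then `P` and `Q` have the same
super-order type. -/
theorem super_order_type_constant_along_simple_path {n : ℕ}
    (P Q : Fin n → ℝ × ℝ) (hP : IsSimpleSeq P) (hQ : IsSimpleSeq Q)
    (f : ℝ → Fin n → ℝ × ℝ) (hf : ContinuousOn f (Set.Icc 0 1))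
    (hf0 : f 0 = P) (hf1 : f 1 = Q)
    (hsimple : ∀ t ∈ Set.Icc (0 : ℝ) 1, IsSimpleSeq (f t)) :
    superOrderType P = superOrderType Q :=
  super_order_type_constant_along_simple_path_general P Q f hf hf0 hf1 hsimple
end

section
/- There exists a constant C > 0 such that for every n ≥ 2 there is a polynomial P* in 2n real variables of total degree at most C · n⁶ with the following property: for every sequence of n pairwise distinct points in ℝ² (viewed as a point of ℝ^{2n}), the sequence is non-simple (its super-order type contains a zero) if and only if P* vanishes at that point. -/
/-!
A sextuple is degenerate exactly when one of six real quantities vanishes: the three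
horizontal extents `a₂.1 - a₁.1`, `b₂.1 - b₁.1`, `c₂.1 - c₁.1`, the two cross products
detecting `A ∥ B` and `A ∥ C`, and, once these are nonzero, a quartic form detecting that
`C` passes through the point `A ∩ B`. All six are polynomials in the coordinates, so their
product is homogeneous of degree `11`, and the product over the at most `n⁶` admissible index
sextuples vanishes exactly on the non-simple sequences.
-/

section Forms

variable {R S : Type*} [CommRing R] [CommRing S]

def crossForm (u v : R × R) : R := u.1 * v.2 - u.2 * v.1

-- Over `ℝ` this is `interParam a₁ a₂ c₁ c₂ - interParam a₁ a₂ b₁ b₂` times both denominators.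
def concurrencyForm (a₁ a₂ b₁ b₂ c₁ c₂ : R × R) : R :=
  crossForm (a₂ - a₁) (b₂ - b₁) * crossForm (c₁ - a₁) (c₂ - c₁) -
    crossForm (b₁ - a₁) (b₂ - b₁) * crossForm (a₂ - a₁) (c₂ - c₁)

def degeneracyForm (a₁ a₂ b₁ b₂ c₁ c₂ : R × R) : R :=
  (a₂.1 - a₁.1) * (b₂.1 - b₁.1) * (c₂.1 - c₁.1) *
    crossForm (a₂ - a₁) (b₂ - b₁) * crossForm (a₂ - a₁) (c₂ - c₁) *
    concurrencyForm a₁ a₂ b₁ b₂ c₁ c₂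

def degeneracyFormAt {ι : Type*} (x : ι → R × R) (t : ι × ι × ι × ι × ι × ι) : R :=
  degeneracyForm (x t.1) (x t.2.1) (x t.2.2.1) (x t.2.2.2.1) (x t.2.2.2.2.1) (x t.2.2.2.2.2)

lemma map_degeneracyFormAt {ι : Type*} (f : R →+* S) (x : ι → R × R)
    (t : ι × ι × ι × ι × ι × ι) :
    f (degeneracyFormAt x t) = degeneracyFormAt (Prod.map f f ∘ x) t := by
  simp [degeneracyFormAt, degeneracyForm, concurrencyForm, crossForm]

lemma isHomogeneous_degeneracyFormAt {ι σ : Type*} (x : ι → MvPolynomial σ R × MvPolynomial σ R)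
    (hx : ∀ i, (x i).1.IsHomogeneous 1 ∧ (x i).2.IsHomogeneous 1) (t : ι × ι × ι × ι × ι × ι) :
    (degeneracyFormAt x t).IsHomogeneous 11 := by
  have hdiff : ∀ i j, (x j - x i).1.IsHomogeneous 1 ∧ (x j - x i).2.IsHomogeneous 1 :=
    fun i j => ⟨(hx j).1.sub (hx i).1, (hx j).2.sub (hx i).2⟩
  have hcross : ∀ i j k l, (crossForm (x j - x i) (x l - x k)).IsHomogeneous 2 := fun i j k l =>
    ((hdiff i j).1.mul (hdiff k l).2).sub ((hdiff i j).2.mul (hdiff k l).1)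
  exact ((((((hdiff _ _).1.mul (hdiff _ _).1).mul (hdiff _ _).1).mul (hcross _ _ _ _)).mul
    (hcross _ _ _ _)).mul
    (((hcross _ _ _ _).mul (hcross _ _ _ _)).sub ((hcross _ _ _ _).mul (hcross _ _ _ _))))

end Forms

lemma crossForm_eq_cross (u v : ℝ × ℝ) : crossForm u v = cross u v := rfl

lemma mem_lineThrough_iff {p q x : ℝ × ℝ} (hpq : p ≠ q) :
    x ∈ lineThrough p q ↔ cross (q - p) (x - p) = 0 := by
  constructor
  · rintro ⟨t, rfl⟩
    simp only [cross, Prod.fst_sub, Prod.snd_sub, Prod.fst_add, Prod.snd_add, Prod.smul_fst,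
      Prod.smul_snd, smul_eq_mul]
    ring
  · intro h
    have hd : (q.1 - p.1) ^ 2 + (q.2 - p.2) ^ 2 ≠ 0 := by
      intro h0
      apply hpq
      ext <;> nlinarith [sq_nonneg (q.1 - p.1), sq_nonneg (q.2 - p.2)]
    -- orthogonal projection of `x - p` onto `q - p`
    refine ⟨((x.1 - p.1) * (q.1 - p.1) + (x.2 - p.2) * (q.2 - p.2)) /
      ((q.1 - p.1) ^ 2 + (q.2 - p.2) ^ 2), ?_⟩
    simp only [cross, Prod.fst_sub, Prod.snd_sub] at h
    ext <;> simp only [Prod.fst_add, Prod.snd_add, Prod.smul_fst, Prod.smul_snd, smul_eq_mul,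
      Prod.fst_sub, Prod.snd_sub] <;> field_simp
    · linear_combination -(q.2 - p.2) * h
    · linear_combination (q.1 - p.1) * h

lemma add_smul_mem_lineThrough_iff {a₁ a₂ b₁ b₂ : ℝ × ℝ} (s : ℝ) (hb : b₁ ≠ b₂) :
    a₁ + s • (a₂ - a₁) ∈ lineThrough b₁ b₂ ↔
      s * cross (a₂ - a₁) (b₂ - b₁) = cross (b₁ - a₁) (b₂ - b₁) := by
  rw [mem_lineThrough_iff hb]
  simp only [cross, Prod.fst_sub, Prod.snd_sub, Prod.fst_add, Prod.snd_add, Prod.smul_fst,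
    Prod.smul_snd, smul_eq_mul]
  constructor <;> intro h <;> linear_combination -h

lemma exists_mem_lineThrough_three_iff {a₁ a₂ b₁ b₂ c₁ c₂ : ℝ × ℝ} (hb : b₁ ≠ b₂) (hc : c₁ ≠ c₂)
    (hAB : cross (a₂ - a₁) (b₂ - b₁) ≠ 0) :
    (∃ p, p ∈ lineThrough a₁ a₂ ∧ p ∈ lineThrough b₁ b₂ ∧ p ∈ lineThrough c₁ c₂) ↔
      concurrencyForm a₁ a₂ b₁ b₂ c₁ c₂ = 0 := by
  simp only [concurrencyForm, crossForm_eq_cross]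
  constructor
  · rintro ⟨_, ⟨s, rfl⟩, hB, hC⟩
    rw [add_smul_mem_lineThrough_iff s hb] at hB
    rw [add_smul_mem_lineThrough_iff s hc] at hC
    rw [← hB, ← hC]
    ring
  · intro h
    refine ⟨_, ⟨interParam a₁ a₂ b₁ b₂, rfl⟩, (add_smul_mem_lineThrough_iff _ hb).2 ?_,
      (add_smul_mem_lineThrough_iff _ hc).2 ?_⟩
    · exact div_mul_cancel₀ _ hAB
    · rw [interParam, div_mul_eq_mul_div, div_eq_iff hAB]
      linear_combination -h

lemma isDegenerate_iff_degeneracyForm_eq_zero (a₁ a₂ b₁ b₂ c₁ c₂ : ℝ × ℝ) :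
    IsDegenerate a₁ a₂ b₁ b₂ c₁ c₂ ↔ degeneracyForm a₁ a₂ b₁ b₂ c₁ c₂ = 0 := by
  simp only [IsDegenerate, degeneracyForm, mul_eq_zero, sub_eq_zero, crossForm_eq_cross,
    @eq_comm _ a₂.1, @eq_comm _ b₂.1, @eq_comm _ c₂.1]
  by_cases h : a₁.1 = a₂.1 ∨ b₁.1 = b₂.1 ∨ c₁.1 = c₂.1 ∨ cross (a₂ - a₁) (b₂ - b₁) = 0 ∨
      cross (a₂ - a₁) (c₂ - c₁) = 0
  · tauto
  · push Not at h
    obtain ⟨-, hb, hc, hAB, -⟩ := h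
    rw [exists_mem_lineThrough_three_iff (ne_of_apply_ne Prod.fst hb)
      (ne_of_apply_ne Prod.fst hc) hAB]
    tauto

lemma sextType_eq_zero_iff (a₁ a₂ b₁ b₂ c₁ c₂ : ℝ × ℝ) :
    sextType a₁ a₂ b₁ b₂ c₁ c₂ = 0 ↔ IsDegenerate a₁ a₂ b₁ b₂ c₁ c₂ := by
  unfold sextType
  split_ifs <;> simp_all

section NonSimplePoly

open MvPolynomial

variable (n : ℕ)

open Classical in
noncomputable def admissibleSextuples : Finset (Fin n × Fin n × Fin n × Fin n × Fin n × Fin n) :=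
  Finset.univ.filter fun t => AdmissibleIdx t.1 t.2.1 t.2.2.1 t.2.2.2.1 t.2.2.2.2.1 t.2.2.2.2.2

lemma mem_admissibleSextuples (t : Fin n × Fin n × Fin n × Fin n × Fin n × Fin n) :
    t ∈ admissibleSextuples n ↔
      AdmissibleIdx t.1 t.2.1 t.2.2.1 t.2.2.2.1 t.2.2.2.2.1 t.2.2.2.2.2 := by
  simp [admissibleSextuples]

lemma card_admissibleSextuples_le : (admissibleSextuples n).card ≤ n ^ 6 := by
  simpa [Fintype.card_prod, pow_succ, mul_assoc] using (admissibleSextuples n).card_le_univ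

noncomputable def coordPoint (i : Fin n) :
    MvPolynomial (Fin n × Fin 2) ℝ × MvPolynomial (Fin n × Fin 2) ℝ :=
  (X (i, 0), X (i, 1))

noncomputable def nonSimplePoly : MvPolynomial (Fin n × Fin 2) ℝ :=
  ∏ t ∈ admissibleSextuples n, degeneracyFormAt (coordPoint n) t

lemma totalDegree_nonSimplePoly_le : (nonSimplePoly n).totalDegree ≤ 11 * n ^ 6 := by
  have hom : (nonSimplePoly n).IsHomogeneous (∑ _t ∈ admissibleSextuples n, 11) :=
    IsHomogeneous.prod _ _ _ fun t _ =>
      isHomogeneous_degeneracyFormAt _ (fun _ => ⟨isHomogeneous_X _ _, isHomogeneous_X _ _⟩) t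
  calc (nonSimplePoly n).totalDegree ≤ (admissibleSextuples n).card * 11 := by
        simpa using hom.totalDegree_le
    _ ≤ 11 * n ^ 6 := by linarith [card_admissibleSextuples_le n]

lemma eval_nonSimplePoly (P : Fin n → ℝ × ℝ) :
    eval (fun v : Fin n × Fin 2 => if v.2 = 0 then (P v.1).1 else (P v.1).2) (nonSimplePoly n) =
      ∏ t ∈ admissibleSextuples n, degeneracyFormAt P t := by
  rw [nonSimplePoly, map_prod]
  congr! 2 with t
  rw [map_degeneracyFormAt]
  congr 1
  ext i <;> simp [coordPoint]

end NonSimplePoly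

/-- There is a constant `C > 0` such that for every `n ≥ 2` there is a polynomial
`P*` in `2n` real variables of total degree at most `C·n⁶` such that a sequence of
`n` pairwise distinct points is non-simple (its super-order type contains a zero)
iff `P*` vanishes at the corresponding point of `ℝ^(2n)`. -/
theorem non_simple_sequences_are_zero_set_of_polynomial :
    ∃ C : ℝ, 0 < C ∧ ∀ n : ℕ, 2 ≤ n →
      ∃ Pstar : MvPolynomial (Fin n × Fin 2) ℝ,
        (Pstar.totalDegree : ℝ) ≤ C * (n : ℝ) ^ 6 ∧
        ∀ P : Fin n → ℝ × ℝ, Function.Injective P →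
          ((∃ i₁ i₂ j₁ j₂ k₁ k₂ : Fin n, AdmissibleIdx i₁ i₂ j₁ j₂ k₁ k₂ ∧
              sextType (P i₁) (P i₂) (P j₁) (P j₂) (P k₁) (P k₂) = 0) ↔
            MvPolynomial.eval
              (fun v : Fin n × Fin 2 => if v.2 = 0 then (P v.1).1 else (P v.1).2)
              Pstar = 0) := by
  refine ⟨11, by norm_num, fun n _ => ⟨nonSimplePoly n, ?_, fun P _ => ?_⟩⟩
  · exact_mod_cast totalDegree_nonSimplePoly_le n
  · rw [eval_nonSimplePoly, Finset.prod_eq_zero_iff]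
    simp only [Prod.exists, mem_admissibleSextuples, degeneracyFormAt,
      ← isDegenerate_iff_degeneracyForm_eq_zero, sextType_eq_zero_iff]
end
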